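/- Let l1, l2, l3 > 0 with l1 + l2 + l3 = 1 and 0 ≤ τ ≤ 1/2, and let F = F_τ^{l1,l2,l3}. Then there exists a nonempty open arc I of ℝ/ℤ on which F² restricts to the identity if and only if τ < max(l1,l2,l3). -/

import Mathlib

open Set

noncomputable section

local instance : Fact ((0:ℝ) < 1) := ⟨one_pos⟩

/-- Representative in `[0,1)` of a point of the circle `ℝ/ℤ`. -/
def rep (x : AddCircle (1:ℝ)) : ℝ := (AddCircle.equivIco 1 0 x : ℝ)

/-- Projection `ℝ → ℝ/ℤ`. -/
def toCirc (t : ℝ) : AddCircle (1:ℝ) := (t : AddCircle (1:ℝ))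

/-- The fully flipped 3-interval exchange transformation `F_τ^{l1,l2,l3}`
(it depends only on `l1`, `l2`, `τ`, since `l3 = 1 - l1 - l2`). -/
def FF (l1 l2 τ : ℝ) (x : AddCircle (1:ℝ)) : AddCircle (1:ℝ) :=
  if rep x < l1 then toCirc (l1 - rep x + τ)
  else if rep x < l1 + l2 then toCirc (2*l1 + l2 - rep x + τ)
  else toCirc (l1 + l2 + 1 - rep x + τ)

/-- A nonempty open arc of the circle `ℝ/ℤ`. -/
def IsOpenArc (I : Set (AddCircle (1:ℝ))) : Prop :=
  ∃ a b : ℝ, a < b ∧ b ≤ a + 1 ∧ I = toCirc '' Ioo a b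

/-!
On each piece `[a, b)` of `[0, l1) ∪ [l1, l1 + l2) ∪ [l1 + l2, 1)` the map `F` is
`x ↦ a + b - x + τ`: the reflection of the piece in itself followed by the rotation by `τ`.
Hence `F (F x) = x + (a' + b') - (a + b)` modulo `1`, where `[a', b')` is the piece containing
`F x`. The sums `a + b` of distinct pieces differ by `l1 + l2`, `1 + l2` or `1 - l1`, never by an
integer, so `F (F x) = x` exactly when `F x` returns to the piece of `x`. For `x` inside `(a, b)`
and `τ ≤ 1/2` this forces `τ < b - a`; conversely, if `τ < b - a`, every point of the arc
`(a + τ, b)` returns to its piece. Points of an arc off the endpoints `0, l1, l1 + l2` exist and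
are needed: for `τ = l1 = 1/2` the point `0` is fixed by `F`.
-/

lemma rep_toCirc (t : ℝ) : rep (toCirc t) = Int.fract t := by
  simp [rep, toCirc, AddCircle.coe_equivIco_mk_apply]

lemma toCirc_rep (x : AddCircle (1:ℝ)) : toCirc (rep x) = x := by
  simpa [toCirc, rep, AddCircle.equivIco, QuotientAddGroup.equivIcoMod] using
    (AddCircle.equivIco 1 0).left_inv x

lemma rep_mem_Ico (x : AddCircle (1:ℝ)) : rep x ∈ Ico 0 1 := by
  rw [← toCirc_rep x, rep_toCirc]
  exact ⟨Int.fract_nonneg _, Int.fract_lt_one _⟩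

lemma toCirc_eq_iff (t : ℝ) (x : AddCircle (1:ℝ)) :
    toCirc t = x ↔ ∃ n : ℤ, t - rep x = n := by
  conv_lhs => rw [← toCirc_rep x]
  simp only [toCirc, AddCircle, QuotientAddGroup.eq_iff_sub_mem,
    AddSubgroup.mem_zmultiples_iff, zsmul_eq_mul, mul_one]
  exact ⟨fun ⟨n, h⟩ => ⟨n, h.symm⟩, fun ⟨n, h⟩ => ⟨n, h.symm⟩⟩

lemma intCast_notMem_Ioo (m n : ℤ) : (n : ℝ) ∉ Ioo (m : ℝ) (m + 1) := by
  rintro ⟨hlo, hhi⟩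
  norm_cast at hlo hhi
  omega

lemma exists_mem_Ioo_fract_notMem {S : Set ℝ} (hS : S.Countable) {a b : ℝ} (hab : a < b) :
    ∃ s ∈ Ioo a b, Int.fract s ∉ S := by
  have hpre : {s : ℝ | Int.fract s ∈ S}.Countable := by
    refine ((hS.prod (Set.countable_univ (α := ℤ))).image fun p => p.1 + p.2).mono ?_
    intro s hs
    exact ⟨(Int.fract s, ⌊s⌋), ⟨hs, trivial⟩, Int.fract_add_floor s⟩
  have hIoo : ¬ Ioo a b ⊆ {s : ℝ | Int.fract s ∈ S} := fun h =>
    (Cardinal.Real.Ioo_countable_iff.1 (hpre.mono h)).not_gt hab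
  exact Set.not_subset.1 hIoo

-- Without wrapping around, landing below `b` forces `τ < x - a`; with wrapping around, landing
-- above `a` forces `b - x ≥ 1 - τ ≥ τ`.
lemma lt_sub_of_fract_reflect_mem_Ico {a b x τ : ℝ} (hx : x ∈ Ioo a b) (hτ : τ ≤ 1 / 2)
    (h : Int.fract (a + b - x + τ) ∈ Ico a b) : τ < b - a := by
  obtain ⟨hax, hxb⟩ := hx
  rw [← Int.self_sub_floor, mem_Ico] at h
  rcases le_or_gt ⌊a + b - x + τ⌋ 0 with hk | hk
  · have : (⌊a + b - x + τ⌋ : ℝ) ≤ 0 := by exact_mod_cast hk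
    linarith
  · have : (1 : ℝ) ≤ ⌊a + b - x + τ⌋ := by exact_mod_cast hk
    linarith

section Pieces

variable (l1 l2 : ℝ)

def pieceStart : Fin 3 → ℝ := ![0, l1, l1 + l2]

def pieceEnd : Fin 3 → ℝ := ![l1, l1 + l2, 1]

def pieceLength (i : Fin 3) : ℝ := pieceEnd l1 l2 i - pieceStart l1 l2 i

def pieceIndex (r : ℝ) : Fin 3 := if r < l1 then 0 else if r < l1 + l2 then 1 else 2

variable {l1 l2}

lemma mem_Ico_pieceIndex {r : ℝ} (hr : r ∈ Ico 0 1) :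
    r ∈ Ico (pieceStart l1 l2 (pieceIndex l1 l2 r)) (pieceEnd l1 l2 (pieceIndex l1 l2 r)) := by
  obtain ⟨hr0, hr1⟩ := hr
  unfold pieceIndex
  split_ifs <;> simp [pieceStart, pieceEnd] <;> constructor <;> linarith

lemma pieceIndex_eq_of_mem (hl2 : 0 ≤ l2) {i : Fin 3} {r : ℝ}
    (hr : r ∈ Ico (pieceStart l1 l2 i) (pieceEnd l1 l2 i)) : pieceIndex l1 l2 r = i := by
  obtain ⟨hlo, hhi⟩ := hr
  unfold pieceIndex
  fin_cases i <;> simp [pieceStart, pieceEnd] at hlo hhi <;> split_ifs <;> simp <;> linarith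

lemma Ico_piece_subset (hl1 : 0 ≤ l1) (hl2 : 0 ≤ l2) (hl12 : l1 + l2 ≤ 1) (i : Fin 3) :
    Ico (pieceStart l1 l2 i) (pieceEnd l1 l2 i) ⊆ Ico 0 1 := by
  apply Ico_subset_Ico <;> fin_cases i <;> simp [pieceStart, pieceEnd] <;> linarith

lemma exists_lt_pieceLength_iff {l3 τ : ℝ} (hsum : l1 + l2 + l3 = 1) :
    (∃ i, τ < pieceLength l1 l2 i) ↔ τ < max l1 (max l2 l3) := by
  have hl3 : l3 = 1 - (l1 + l2) := by linarith
  simp [Fin.exists_fin_succ, pieceLength, pieceStart, pieceEnd, hl3]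

lemma pieceSum_sub_eq_intCast_iff (hl1 : 0 < l1) (hl2 : 0 < l2) (hl12 : l1 + l2 < 1)
    (i j : Fin 3) :
    (∃ n : ℤ,
        pieceStart l1 l2 j + pieceEnd l1 l2 j - (pieceStart l1 l2 i + pieceEnd l1 l2 i) = n) ↔
      i = j := by
  refine ⟨fun ⟨n, hn⟩ => ?_, fun hij => ⟨0, by simp [hij]⟩⟩
  fin_cases i <;> fin_cases j <;> simp [pieceStart, pieceEnd] at hn ⊢
  · exact intCast_notMem_Ioo 0 n ⟨by push_cast; linarith, by push_cast; linarith⟩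
  · exact intCast_notMem_Ioo 1 n ⟨by push_cast; linarith, by push_cast; linarith⟩
  · exact intCast_notMem_Ioo (-1) n ⟨by push_cast; linarith, by push_cast; linarith⟩
  · exact intCast_notMem_Ioo 0 n ⟨by push_cast; linarith, by push_cast; linarith⟩
  · exact intCast_notMem_Ioo (-2) n ⟨by push_cast; linarith, by push_cast; linarith⟩
  · exact intCast_notMem_Ioo (-1) n ⟨by push_cast; linarith, by push_cast; linarith⟩

variable (τ : ℝ)

lemma FF_eq_reflect (x : AddCircle (1:ℝ)) :
    FF l1 l2 τ x = toCirc (pieceStart l1 l2 (pieceIndex l1 l2 (rep x))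
      + pieceEnd l1 l2 (pieceIndex l1 l2 (rep x)) - rep x + τ) := by
  unfold FF pieceIndex
  split_ifs <;> simp only [pieceStart, pieceEnd, Fin.isValue, Matrix.cons_val] <;> ring_nf

variable {τ}

lemma FF_FF_eq_iff (hl1 : 0 < l1) (hl2 : 0 < l2) (hl12 : l1 + l2 < 1)
    (x : AddCircle (1:ℝ)) :
    FF l1 l2 τ (FF l1 l2 τ x) = x ↔
      pieceIndex l1 l2 (rep (FF l1 l2 τ x)) = pieceIndex l1 l2 (rep x) := by
  set i := pieceIndex l1 l2 (rep x)
  set j := pieceIndex l1 l2 (rep (FF l1 l2 τ x))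
  set u := pieceStart l1 l2 i + pieceEnd l1 l2 i - rep x + τ with hu
  have hrepF : rep (FF l1 l2 τ x) = u - ⌊u⌋ := by
    rw [FF_eq_reflect, rep_toCirc, Int.self_sub_floor]
  rw [FF_eq_reflect τ (FF l1 l2 τ x), toCirc_eq_iff]
  rw [eq_comm, ← pieceSum_sub_eq_intCast_iff hl1 hl2 hl12 i j]
  constructor
  · rintro ⟨n, hn⟩
    exact ⟨n - ⌊u⌋, by push_cast; linarith⟩
  · rintro ⟨n, hn⟩
    exact ⟨n + ⌊u⌋, by push_cast; linarith⟩

lemma lt_pieceLength_of_FF_FF_eq (hl1 : 0 < l1) (hl2 : 0 < l2) (hl12 : l1 + l2 < 1)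
    (hτ : τ ≤ 1 / 2) {x : AddCircle (1:ℝ)} (hx : rep x ∉ range (pieceStart l1 l2))
    (hper : FF l1 l2 τ (FF l1 l2 τ x) = x) :
    τ < pieceLength l1 l2 (pieceIndex l1 l2 (rep x)) := by
  set i := pieceIndex l1 l2 (rep x)
  obtain ⟨hlo, hhi⟩ := mem_Ico_pieceIndex (l1 := l1) (l2 := l2) (rep_mem_Ico x)
  have hmem : rep x ∈ Ioo (pieceStart l1 l2 i) (pieceEnd l1 l2 i) :=
    ⟨lt_of_le_of_ne hlo fun h => hx ⟨i, h⟩, hhi⟩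
  have hFx := mem_Ico_pieceIndex (l1 := l1) (l2 := l2) (rep_mem_Ico (FF l1 l2 τ x))
  rw [(FF_FF_eq_iff hl1 hl2 hl12 x).1 hper, FF_eq_reflect, rep_toCirc] at hFx
  exact lt_sub_of_fract_reflect_mem_Ico hmem hτ hFx

lemma FF_FF_eq_of_mem_Ioo (hl1 : 0 < l1) (hl2 : 0 < l2) (hl12 : l1 + l2 < 1)
    (hτ0 : 0 ≤ τ) {i : Fin 3} {t : ℝ}
    (ht : t ∈ Ioo (pieceStart l1 l2 i + τ) (pieceEnd l1 l2 i)) :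
    FF l1 l2 τ (FF l1 l2 τ (toCirc t)) = toCirc t := by
  obtain ⟨hlo, hhi⟩ := ht
  have hsub := Ico_piece_subset hl1.le hl2.le hl12.le i
  have hpiece : ∀ s ∈ Ico (pieceStart l1 l2 i) (pieceEnd l1 l2 i),
      rep (toCirc s) = s ∧ pieceIndex l1 l2 (rep (toCirc s)) = i := fun s hs => by
    have hrep : rep (toCirc s) = s := by rw [rep_toCirc, Int.fract_eq_self]; exact hsub hs
    exact ⟨hrep, by rw [hrep]; exact pieceIndex_eq_of_mem hl2.le hs⟩
  obtain ⟨hrep, hidx⟩ := hpiece t ⟨by linarith, hhi⟩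
  rw [FF_FF_eq_iff hl1 hl2 hl12, hidx, FF_eq_reflect, hidx, hrep]
  exact (hpiece _ ⟨by linarith, by linarith⟩).2

end Pieces

/-- For `0 ≤ τ ≤ 1/2`, `F_τ^{l1,l2,l3}` has a `2`-periodic interval iff
`τ < max (l1, l2, l3)`. -/
theorem statement11 (l1 l2 l3 τ : ℝ)
    (h1 : 0 < l1) (h2 : 0 < l2) (h3 : 0 < l3) (hsum : l1 + l2 + l3 = 1)
    (hτ0 : 0 ≤ τ) (hτ : τ ≤ 1/2) :
    (∃ I : Set (AddCircle (1:ℝ)), IsOpenArc I ∧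
        ∀ x ∈ I, FF l1 l2 τ (FF l1 l2 τ x) = x) ↔
      τ < max l1 (max l2 l3) := by
  have hl12 : l1 + l2 < 1 := by linarith
  rw [← exists_lt_pieceLength_iff hsum]
  constructor
  · rintro ⟨_, ⟨a, b, hab, -, rfl⟩, hper⟩
    obtain ⟨s, hs, hgeneric⟩ :=
      exists_mem_Ioo_fract_notMem (Set.finite_range (pieceStart l1 l2)).countable hab
    rw [← rep_toCirc] at hgeneric
    exact ⟨_, lt_pieceLength_of_FF_FF_eq h1 h2 hl12 hτ hgeneric (hper _ ⟨s, hs, rfl⟩)⟩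
  · rintro ⟨i, hi⟩
    have hlen : pieceLength l1 l2 i ≤ 1 := by
      fin_cases i <;> simp [pieceLength, pieceStart, pieceEnd] <;> linarith
    rw [pieceLength] at hi hlen
    refine ⟨_, ⟨pieceStart l1 l2 i + τ, pieceEnd l1 l2 i, by linarith, by linarith, rfl⟩,
      ?_⟩
    rintro _ ⟨t, ht, rfl⟩
    exact FF_FF_eq_of_mem_Ioo h1 h2 hl12 hτ0 ht
end
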